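/- arXiv:2210.05237 — 2 statements merged into one kernel-verified Lean document; each statement's English description precedes it below -/
import Mathlib

section
/- With m = 2 resources, the mechanism F1 satisfies SI, EF, PO, and SP. -/
/-!
At water level `t`, F1 gives agent `i` the bundle `σᵢ(t) • dᵢ`, where `σᵢ(t) = 1/n` if
`dᵢ₀ = 1` and `σᵢ(t) = max (1/n) (t / dᵢ₀)` otherwise. The feasible levels form a closed set,
bounded by `1/n` as soon as some `dᵢ₀ < 1`, so F1 runs at its maximum `T`, where by continuity
some resource is exhausted. As every bundle is proportional to its demand vector, SI is
`σᵢ ≥ 1/n` and PO follows from the exhausted resource.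

EF and SP rest on one observation: an agent with `σ > 1/n` holds exactly `T` of resource `0`,
while every agent holds at least `T` of it. So an agent can only envy an agent at the base share
`1/n`, whose bundle is worth at most `1/n` on the envier's dominant resource. Likewise a
misreport worth `u > 1/n` to agent `i` puts `i` above the base share, holding exactly the
misreported level `T' ≥ u · dᵢ₀` of resource `0`; the truthful instance is then feasible at
level `u · dᵢ₀`, so `u · dᵢ₀ ≤ T` and `u ≤ σᵢ(T)`.
-/

open Finset
open scoped Classical

/-- A valid instance: all demands lie in `(0,1]` and every agent has a resource
with normalized demand `1` (its dominant resource). -/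
def ValidInstance {n m : ℕ} (d : Fin n → Fin m → ℝ) : Prop :=
  (∀ i r, 0 < d i r ∧ d i r ≤ 1) ∧ ∀ i, ∃ r, d i r = 1

/-- Entrywise nonnegative allocation. -/
def NonnegAlloc {n m : ℕ} (A : Fin n → Fin m → ℝ) : Prop := ∀ i r, 0 ≤ A i r

/-- A feasible allocation: nonnegative and no resource over-allocated. -/
def Feasible {n m : ℕ} (A : Fin n → Fin m → ℝ) : Prop :=
  NonnegAlloc A ∧ ∀ r, ∑ i, A i r ≤ 1

/-- Leontief utility of a bundle `Av` for demand vector `dv`: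
the largest `y ≥ 0` with `y * dv r ≤ Av r` for all `r`. -/
noncomputable def util {m : ℕ} (dv Av : Fin m → ℝ) : ℝ :=
  sSup {y : ℝ | 0 ≤ y ∧ ∀ r, y * dv r ≤ Av r}

/-- Share incentive: every agent gets utility at least `1/n`. -/
def SI {n m : ℕ} (d A : Fin n → Fin m → ℝ) : Prop :=
  ∀ i, (1 : ℝ) / n ≤ util (d i) (A i)

/-- Envy-freeness: no agent prefers another agent's bundle. -/
def EF {n m : ℕ} (d A : Fin n → Fin m → ℝ) : Prop :=
  ∀ i j, util (d i) (A j) ≤ util (d i) (A i)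

/-- Social welfare: the sum of all utilities. -/
noncomputable def SW {n m : ℕ} (d A : Fin n → Fin m → ℝ) : ℝ :=
  ∑ i, util (d i) (A i)

/-- Utilization: the minimum over resources of the total allocated amount. -/
noncomputable def Util {n m : ℕ} (A : Fin n → Fin m → ℝ) : ℝ :=
  ⨅ r : Fin m, ∑ i, A i r

/-- Pareto optimality of an allocation. -/
def PO {n m : ℕ} (d A : Fin n → Fin m → ℝ) : Prop :=
  ¬ ∃ A' : Fin n → Fin m → ℝ, Feasible A' ∧
      (∀ i, util (d i) (A i) ≤ util (d i) (A' i)) ∧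
      ∃ i, util (d i) (A i) < util (d i) (A' i)

/-- Agents whose dominant resource is resource 1 (index `0`). -/
noncomputable def G1 {n m : ℕ} [NeZero m] (d : Fin n → Fin m → ℝ) : Finset (Fin n) :=
  Finset.univ.filter (fun i => d i 0 = 1)

/-- Agents whose demand for resource 1 (index `0`) is below `1`. -/
noncomputable def G2 {n m : ℕ} [NeZero m] (d : Fin n → Fin m → ℝ) : Finset (Fin n) :=
  Finset.univ.filter (fun i => d i 0 < 1)

/-- Minority ratio `α = |G2| / n` for two resources. -/
def MinorityRatio {n : ℕ} (d : Fin n → Fin 2 → ℝ) (α : ℚ) : Prop :=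
  ((G2 d).card : ℚ) = α * n

/-- The DRF allocation: every agent gets `x* • d i` with
`x* = 1 / max_r Σ_j d j r`. -/
noncomputable def DRF {n m : ℕ} (d : Fin n → Fin m → ℝ) : Fin n → Fin m → ℝ :=
  fun i r => (1 / ⨆ r' : Fin m, ∑ j, d j r') * d i r

/-- The F1 allocation at water level `t`: agents in `G1` get dominant share `1/n`;
an agent `i` with `d i 0 < 1` gets `max (d i 0 / n) t` of resource 1, i.e. has
scale factor `max (1/n) (t / d i 0)`. -/
noncomputable def F1At {n m : ℕ} [NeZero m] (d : Fin n → Fin m → ℝ) (t : ℝ) :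
    Fin n → Fin m → ℝ :=
  fun i r => (if d i 0 = 1 then (1 : ℝ) / n else max ((1 : ℝ) / n) (t / d i 0)) * d i r

/-- The F1 allocation: F1 at the largest feasible water level. -/
noncomputable def F1 {n m : ℕ} [NeZero m] (d : Fin n → Fin m → ℝ) : Fin n → Fin m → ℝ :=
  F1At d (sSup {t : ℝ | 0 ≤ t ∧ Feasible (F1At d t)})

section Leontief

variable {m : ℕ} {dv Av : Fin m → ℝ}

theorem util_mul_le {r : Fin m} (hr : 0 < dv r) (hA : 0 ≤ Av r) :
    util dv Av * dv r ≤ Av r := by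
  refine (le_div_iff₀ hr).mp (Real.sSup_le ?_ (div_nonneg hA hr.le))
  rintro y ⟨-, hy⟩
  exact (le_div_iff₀ hr).mpr (hy r)

theorem util_smul [NeZero m] (hdv : ∀ r, 0 < dv r) {y : ℝ} (hy : 0 ≤ y) :
    util dv (y • dv) = y := by
  have : {x : ℝ | 0 ≤ x ∧ ∀ r, x * dv r ≤ (y • dv) r} = Set.Icc 0 y := by
    ext x
    simp only [Pi.smul_apply, smul_eq_mul, Set.mem_ofPred_eq, Set.mem_Icc]
    exact and_congr_right fun _ =>
      ⟨fun h => le_of_mul_le_mul_right (h 0) (hdv 0), fun h r => by gcongr; exact (hdv r).le⟩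
  rw [util, this, csSup_Icc hy]

end Leontief

theorem sum_one_div_eq_one {n : ℕ} (hn : n ≠ 0) : ∑ _i : Fin n, (1 : ℝ) / n = 1 := by
  simp [hn]

theorem sum_one_div_le_one (n : ℕ) : ∑ _i : Fin n, (1 : ℝ) / n ≤ 1 := by
  rcases eq_or_ne n 0 with rfl | hn
  · simp
  · exact (sum_one_div_eq_one hn).le

theorem Feasible.mono {n m : ℕ} {A B : Fin n → Fin m → ℝ} (hB : Feasible B)
    (hA : NonnegAlloc A) (hAB : ∀ i r, A i r ≤ B i r) : Feasible A :=
  ⟨hA, fun r => (Finset.sum_le_sum fun i _ => hAB i r).trans (hB.2 r)⟩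

theorem po_of_sum_eq_one {n m : ℕ} [NeZero m] {d : Fin n → Fin m → ℝ} {σ : Fin n → ℝ}
    (hd : ∀ i r, 0 < d i r) (hσ : ∀ i, 0 ≤ σ i) {r : Fin m} (hr : ∑ i, σ i * d i r = 1) :
    PO d (fun i => σ i • d i) := by
  rintro ⟨A', hA', hge, i₀, hlt⟩
  simp only [util_smul (hd _) (hσ _)] at hge hlt
  have hle : ∀ i, σ i * d i r ≤ A' i r := fun i =>
    (mul_le_mul_of_nonneg_right (hge i) (hd i r).le).trans (util_mul_le (hd i r) (hA'.1 i r))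
  have hlt : σ i₀ * d i₀ r < A' i₀ r :=
    (mul_lt_mul_of_pos_right hlt (hd i₀ r)).trans_le (util_mul_le (hd i₀ r) (hA'.1 i₀ r))
  have := Finset.sum_lt_sum (fun i _ => hle i) ⟨i₀, Finset.mem_univ _, hlt⟩
  linarith [hA'.2 r]

namespace F1

variable {n m : ℕ} [NeZero m] {d : Fin n → Fin m → ℝ} {i : Fin n} {s t : ℝ}

noncomputable def scale (d : Fin n → Fin m → ℝ) (t : ℝ) (i : Fin n) : ℝ :=
  if d i 0 = 1 then (1 : ℝ) / n else max ((1 : ℝ) / n) (t / d i 0)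

theorem F1At_apply (d : Fin n → Fin m → ℝ) (t : ℝ) (i : Fin n) :
    F1At d t i = scale d t i • d i :=
  rfl

def levels (d : Fin n → Fin m → ℝ) : Set ℝ := {t | 0 ≤ t ∧ Feasible (F1At d t)}

noncomputable def level (d : Fin n → Fin m → ℝ) : ℝ := sSup (levels d)

theorem eq_F1At_level (d : Fin n → Fin m → ℝ) : F1 d = F1At d (level d) :=
  rfl

theorem scale_of_eq_one (h : d i 0 = 1) : scale d t i = (1 : ℝ) / n := if_pos h

theorem scale_of_ne_one (h : d i 0 ≠ 1) : scale d t i = max ((1 : ℝ) / n) (t / d i 0) :=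
  if_neg h

theorem one_div_le_scale : (1 : ℝ) / n ≤ scale d t i := by
  unfold scale; split_ifs
  exacts [le_rfl, le_max_left _ _]

theorem scale_nonneg : 0 ≤ scale d t i :=
  (by positivity : (0 : ℝ) ≤ 1 / n).trans one_div_le_scale

theorem scale_zero : scale d 0 i = (1 : ℝ) / n := by
  unfold scale; split_ifs
  exacts [rfl, by rw [zero_div, max_eq_left (by positivity)]]

theorem scale_mono (h0 : 0 ≤ d i 0) (hst : s ≤ t) : scale d s i ≤ scale d t i := by
  unfold scale; split_ifs
  exacts [le_rfl, max_le_max le_rfl (by gcongr)]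

theorem continuous_scale : Continuous fun t => scale d t i := by
  unfold scale; split_ifs <;> fun_prop

theorem ne_one_of_one_div_lt_scale (h : (1 : ℝ) / n < scale d t i) : d i 0 ≠ 1 :=
  fun h1 => h.ne' (scale_of_eq_one h1)

theorem scale_mul_eq_of_one_div_lt (h0 : d i 0 ≠ 0) (h : (1 : ℝ) / n < scale d t i) :
    scale d t i * d i 0 = t := by
  have hσ := scale_of_ne_one (t := t) (ne_one_of_one_div_lt_scale h)
  rw [hσ] at h ⊢
  rw [max_eq_right (lt_max_iff.mp h |>.resolve_left (lt_irrefl _)).le, div_mul_cancel₀ _ h0]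

theorem le_scale_mul_of_ne_one (h0 : 0 < d i 0) (h1 : d i 0 ≠ 1) :
    t ≤ scale d t i * d i 0 := by
  rw [scale_of_ne_one h1]
  calc t = t / d i 0 * d i 0 := (div_mul_cancel₀ _ h0.ne').symm
    _ ≤ _ := by gcongr; exact le_max_right _ _

theorem le_scale_mul (h0 : 0 < d i 0) (ht : t ≤ 1 / n) : t ≤ scale d t i * d i 0 := by
  by_cases h1 : d i 0 = 1
  · rwa [scale_of_eq_one h1, h1, mul_one]
  · exact le_scale_mul_of_ne_one h0 h1

theorem scale_mul_self_le (h0 : 0 < d i 0) {u : ℝ} (hu : (1 : ℝ) / n ≤ u) :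
    scale d (u * d i 0) i ≤ u := by
  unfold scale; split_ifs
  · exact hu
  · rw [mul_div_cancel_right₀ _ h0.ne']
    exact max_le hu le_rfl

theorem mem_G2 (hd : ValidInstance d) (h : d i 0 ≠ 1) : i ∈ G2 d :=
  Finset.mem_filter.mpr ⟨Finset.mem_univ _, (hd.1 i 0).2.lt_of_ne h⟩

theorem nonnegAlloc_F1At (hd : ValidInstance d) (t : ℝ) : NonnegAlloc (F1At d t) :=
  fun i r => mul_nonneg scale_nonneg (hd.1 i r).1.le

theorem feasible_F1At_zero (hd : ValidInstance d) : Feasible (F1At d 0) := by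
  refine ⟨nonnegAlloc_F1At hd 0, fun r => le_trans ?_ (sum_one_div_le_one n)⟩
  refine Finset.sum_le_sum fun i _ => ?_
  rw [F1At_apply, Pi.smul_apply, smul_eq_mul, scale_zero]
  exact mul_le_of_le_one_right (by positivity) (hd.1 i r).2

theorem zero_mem_levels (hd : ValidInstance d) : (0 : ℝ) ∈ levels d :=
  ⟨le_rfl, feasible_F1At_zero hd⟩

theorem le_one_div_of_mem_levels (hd : ValidInstance d) (hG2 : (G2 d).Nonempty)
    (ht : t ∈ levels d) : t ≤ 1 / n := by
  by_contra! hlt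
  obtain ⟨i₀, hi₀⟩ := hG2
  have hi₀ : d i₀ 0 ≠ 1 := (Finset.mem_filter.mp hi₀).2.ne
  have hshare : ∀ j, d j 0 ≠ 1 → t ≤ F1At d t j 0 := fun j h1 =>
    le_scale_mul_of_ne_one (hd.1 j 0).1 h1
  have hle : ∀ j, (1 : ℝ) / n ≤ F1At d t j 0 := fun j => by
    by_cases h1 : d j 0 = 1
    · rw [F1At_apply, Pi.smul_apply, scale_of_eq_one h1, h1, smul_eq_mul, mul_one]
    · exact hlt.le.trans (hshare j h1)
  have := Finset.sum_lt_sum (fun j _ => hle j)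
    ⟨i₀, Finset.mem_univ _, hlt.trans_le (hshare i₀ hi₀)⟩
  rw [sum_one_div_eq_one i₀.pos.ne'] at this
  exact (ht.2.2 0).not_gt this

theorem bddAbove_levels (hd : ValidInstance d) (hG2 : (G2 d).Nonempty) : BddAbove (levels d) :=
  ⟨1 / n, fun _ => le_one_div_of_mem_levels hd hG2⟩

theorem continuous_F1At (r : Fin m) : Continuous fun t => F1At d t i r :=
  continuous_scale.mul continuous_const

theorem continuous_sum_F1At (r : Fin m) : Continuous fun t => ∑ i, F1At d t i r :=
  continuous_finsetSum _ fun _ _ => continuous_F1At r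

theorem isClosed_levels : IsClosed (levels d) := by
  simp only [levels, Feasible, NonnegAlloc, Set.ofPred_and, Set.ofPred_forall]
  exact (isClosed_le continuous_const continuous_id).inter
    ((isClosed_iInter fun i => isClosed_iInter fun r => isClosed_le continuous_const
      (continuous_F1At r)).inter
    (isClosed_iInter fun r => isClosed_le (continuous_sum_F1At r) continuous_const))

theorem level_mem_levels (hd : ValidInstance d) (hG2 : (G2 d).Nonempty) : level d ∈ levels d :=
  isClosed_levels.csSup_mem ⟨0, zero_mem_levels hd⟩ (bddAbove_levels hd hG2)

theorem level_le_one_div (hd : ValidInstance d) (hG2 : (G2 d).Nonempty) : level d ≤ 1 / n :=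
  le_one_div_of_mem_levels hd hG2 (level_mem_levels hd hG2)

theorem eq_one_of_not_nonempty_G2 (hd : ValidInstance d) (hG2 : ¬ (G2 d).Nonempty) (i : Fin n) :
    d i 0 = 1 :=
  by_contra fun h => hG2 ⟨i, mem_G2 hd h⟩

theorem eq_F1At_zero_of_not_nonempty (hd : ValidInstance d) (hG2 : ¬ (G2 d).Nonempty) :
    F1 d = F1At d 0 := by
  ext i r
  simp only [eq_F1At_level, F1At_apply, scale_of_eq_one (eq_one_of_not_nonempty_G2 hd hG2 i)]

theorem feasible (hd : ValidInstance d) : Feasible (F1 d) := by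
  by_cases hG2 : (G2 d).Nonempty
  · exact (level_mem_levels hd hG2).2
  · rw [eq_F1At_zero_of_not_nonempty hd hG2]
    exact feasible_F1At_zero hd

theorem exists_sum_eq_one (hd : ValidInstance d) (hn : n ≠ 0) : ∃ r, ∑ i, F1 d i r = 1 := by
  by_cases hG2 : (G2 d).Nonempty
  · by_contra! hne
    have hmem := level_mem_levels hd hG2
    have hopen : IsOpen {t : ℝ | ∀ r, ∑ i, F1At d t i r < 1} := by
      simp only [Set.ofPred_forall]
      exact isOpen_iInter_of_finite fun r => isOpen_lt (continuous_sum_F1At r) continuous_const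
    have hlt : ∀ r, ∑ i, F1 d i r < 1 := fun r => (hmem.2.2 r).lt_of_ne (hne r)
    obtain ⟨t, hTt, ht⟩ := Filter.Eventually.exists_gt (hopen.mem_nhds hlt)
    have htmem : t ∈ levels d :=
      ⟨hmem.1.trans hTt.le, nonnegAlloc_F1At hd t, fun r => (ht r).le⟩
    exact (le_csSup (bddAbove_levels hd hG2) htmem).not_gt hTt
  · refine ⟨0, ?_⟩
    simp only [eq_F1At_zero_of_not_nonempty hd hG2, F1At_apply, Pi.smul_apply, smul_eq_mul,
      scale_zero, eq_one_of_not_nonempty_G2 hd hG2, mul_one]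
    exact sum_one_div_eq_one hn

theorem F1At_le_F1At (hd : ValidInstance d) (hst : s ≤ t) (r : Fin m) :
    F1At d s i r ≤ F1At d t i r :=
  mul_le_mul_of_nonneg_right (scale_mono (hd.1 i 0).1.le hst) (hd.1 i r).1.le

theorem F1At_eq_of_row_eq {d' : Fin n → Fin m → ℝ} (h : d' i = d i) :
    F1At d' t i = F1At d t i := by
  ext r
  simp only [F1At, h]

theorem util_eq_scale (hd : ValidInstance d) (i : Fin n) :
    util (d i) (F1 d i) = scale d (level d) i :=
  util_smul (fun r => (hd.1 i r).1) scale_nonneg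

theorem si (hd : ValidInstance d) : SI d (F1 d) := fun i => by
  rw [util_eq_scale hd]
  exact one_div_le_scale

theorem ef (hd : ValidInstance d) : EF d (F1 d) := by
  intro i j
  rw [util_eq_scale hd]
  set T := level d
  set u := util (d i) (F1 d j)
  have hu (r : Fin m) : u * d i r ≤ scale d T j * d j r :=
    util_mul_le (hd.1 i r).1 (nonnegAlloc_F1At hd T j r)
  rcases le_or_gt (scale d T j) (1 / n) with hj | hj
  · obtain ⟨r, hr⟩ := hd.2 i
    calc u = u * d i r := by rw [hr, mul_one]
      _ ≤ scale d T j * d j r := hu r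
      _ ≤ scale d T j := mul_le_of_le_one_right scale_nonneg (hd.1 j r).2
      _ ≤ 1 / n := hj
      _ ≤ scale d T i := one_div_le_scale
  · have hG2 : (G2 d).Nonempty := ⟨j, mem_G2 hd (ne_one_of_one_div_lt_scale hj)⟩
    refine le_of_mul_le_mul_right ?_ (hd.1 i 0).1
    calc u * d i 0 ≤ scale d T j * d j 0 := hu 0
      _ = T := scale_mul_eq_of_one_div_lt (hd.1 j 0).1.ne' hj
      _ ≤ scale d T i * d i 0 := le_scale_mul (hd.1 i 0).1 (level_le_one_div hd hG2)

theorem po (hd : ValidInstance d) (hn : n ≠ 0) : PO d (F1 d) :=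
  let ⟨_, hr⟩ := exists_sum_eq_one hd hn
  po_of_sum_eq_one (fun i r => (hd.1 i r).1) (fun _ => scale_nonneg) hr

theorem mul_mem_levels_of_le {d' : Fin n → Fin m → ℝ} (hd : ValidInstance d)
    (hd' : ValidInstance d') (hdi : ∀ j, j ≠ i → d' j = d j) {u : ℝ} (hu : (1 : ℝ) / n ≤ u)
    (ht : t ∈ levels d') (hut : u * d i 0 ≤ t) (hle : ∀ r, u * d i r ≤ F1At d' t i r) :
    u * d i 0 ∈ levels d := by
  have hdom (j : Fin n) (r : Fin m) : F1At d (u * d i 0) j r ≤ F1At d' t j r := by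
    by_cases hji : j = i
    · subst hji
      calc F1At d (u * d j 0) j r = scale d (u * d j 0) j * d j r := rfl
        _ ≤ u * d j r :=
          mul_le_mul_of_nonneg_right (scale_mul_self_le (hd.1 j 0).1 hu) (hd.1 j r).1.le
        _ ≤ F1At d' t j r := hle r
    · rw [← F1At_eq_of_row_eq (hdi j hji)]
      exact F1At_le_F1At hd' hut r
  exact ⟨mul_nonneg ((by positivity : (0 : ℝ) ≤ 1 / n).trans hu) (hd.1 i 0).1.le,
    ht.2.mono (nonnegAlloc_F1At hd _) hdom⟩

theorem util_misreport_le {d' : Fin n → Fin m → ℝ} (hd : ValidInstance d)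
    (hd' : ValidInstance d') (hdi : ∀ j, j ≠ i → d' j = d j) :
    util (d i) (F1 d' i) ≤ util (d i) (F1 d i) := by
  rw [util_eq_scale hd]
  set T' := level d'
  set u := util (d i) (F1 d' i)
  by_contra! hlt
  have hu (r : Fin m) : u * d i r ≤ scale d' T' i * d' i r :=
    util_mul_le (hd.1 i r).1 (nonnegAlloc_F1At hd' T' i r)
  obtain ⟨r, hr⟩ := hd.2 i
  have hσ' : (1 : ℝ) / n < scale d' T' i := calc
    (1 : ℝ) / n ≤ scale d (level d) i := one_div_le_scale
    _ < u := hlt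
    _ = u * d i r := by rw [hr, mul_one]
    _ ≤ scale d' T' i * d' i r := hu r
    _ ≤ scale d' T' i := mul_le_of_le_one_right scale_nonneg (hd'.1 i r).2
  have hG2' : (G2 d').Nonempty := ⟨i, mem_G2 hd' (ne_one_of_one_div_lt_scale hσ')⟩
  have hs : u * d i 0 ≤ T' :=
    (hu 0).trans_eq (scale_mul_eq_of_one_div_lt (hd'.1 i 0).1.ne' hσ')
  by_cases h1 : d i 0 = 1
  · rw [scale_of_eq_one h1] at hlt
    rw [h1, mul_one] at hs
    exact (hs.trans (level_le_one_div hd' hG2')).not_gt hlt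
  have hG2 : (G2 d).Nonempty := ⟨i, mem_G2 hd h1⟩
  have hmem : u * d i 0 ∈ levels d :=
    mul_mem_levels_of_le hd hd' hdi (one_div_le_scale.trans hlt.le)
      (level_mem_levels hd' hG2') hs hu
  have hle : u * d i 0 ≤ scale d (level d) i * d i 0 :=
    (le_csSup (bddAbove_levels hd hG2) hmem).trans
      (le_scale_mul (hd.1 i 0).1 (level_le_one_div hd hG2))
  exact hlt.not_ge (le_of_mul_le_mul_right hle (hd.1 i 0).1)

end F1

/-- With two resources, mechanism F1 satisfies SI, EF, PO and SP. -/
theorem f1_properties :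
    (∀ (n : ℕ), 0 < n → ∀ d : Fin n → Fin 2 → ℝ, ValidInstance d →
      Feasible (F1 d) ∧ SI d (F1 d) ∧ EF d (F1 d) ∧ PO d (F1 d)) ∧
    (∀ (n : ℕ), 0 < n → ∀ (d d' : Fin n → Fin 2 → ℝ) (i : Fin n),
      ValidInstance d → ValidInstance d' → (∀ j, j ≠ i → d' j = d j) →
      util (d i) (F1 d' i) ≤ util (d i) (F1 d i)) :=
  ⟨fun _ hn _ hd => ⟨F1.feasible hd, F1.si hd, F1.ef hd, F1.po hd hn.ne'⟩,
    fun _ _ _ _ _ hd hd' hdi => F1.util_misreport_le hd hd' hdi⟩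
end

section
/- With m = 2 resources, the mechanism F2* satisfies SI, EF, PO, and SP. -/
open Finset
open scoped Classical

/-- Residual amount of resource 1 after every agent receives `(1/n) • d i`. -/
noncomputable def R1 {n : ℕ} (d : Fin n → Fin 2 → ℝ) : ℝ :=
  1 - ((G1 d).card : ℝ) / n - (∑ i ∈ G2 d, d i 0) / n

/-- Residual amount of resource 2 after every agent receives `(1/n) • d i`. -/
noncomputable def R2 {n : ℕ} (d : Fin n → Fin 2 → ℝ) : ℝ :=
  1 - ((G2 d).card : ℝ) / n - (∑ i ∈ G1 d, d i 1) / n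

/-- Total increase over the equal split of the resource-1 shares of `G1`. -/
noncomputable def dS1 {n : ℕ} (d A : Fin n → Fin 2 → ℝ) : ℝ :=
  (∑ i ∈ G1 d, A i 0) - ((G1 d).card : ℝ) / n

/-- Total increase over the equal split of the resource-2 shares of `G2`. -/
noncomputable def dS2 {n : ℕ} (d A : Fin n → Fin 2 → ℝ) : ℝ :=
  (∑ i ∈ G2 d, A i 1) - ((G2 d).card : ℝ) / n

/-- Water-filling structure of the F2-type allocations: within `G1` the
resource-2 shares are `max (d i 1 / n) t1`, within `G2` the resource-1 shares
are `max (d i 0 / n) t2`, and bundles are proportional to demands. -/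
def Waterfill {n : ℕ} (d A : Fin n → Fin 2 → ℝ) (t1 t2 : ℝ) : Prop :=
  ∀ i, (d i 0 = 1 → A i 1 = max (d i 1 / n) t1 ∧ A i 0 = A i 1 / d i 1) ∧
       (d i 0 < 1 → A i 0 = max (d i 0 / n) t2 ∧ A i 1 = A i 0 / d i 0)

/-- The output of an F2-type mechanism whose coupled rates follow the ratio
`ρ1 / ρ2`: a feasible water-filling allocation with
`dS1 / dS2 = ρ1 / ρ2` in which some resource is fully allocated. -/
def IsF2AllocWith {n : ℕ} (d A : Fin n → Fin 2 → ℝ) (ρ1 ρ2 : ℝ) : Prop :=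
  ∃ t1 t2 : ℝ, 0 ≤ t1 ∧ 0 ≤ t2 ∧ Waterfill d A t1 t2 ∧
    dS1 d A * ρ2 = dS2 d A * ρ1 ∧ Feasible A ∧ ∃ r, ∑ i, A i r = 1

/-- The output of mechanism F2 (rates coupled by `R1 / R2`). -/
def IsF2Alloc {n : ℕ} (d A : Fin n → Fin 2 → ℝ) : Prop :=
  IsF2AllocWith d A (R1 d) (R2 d)

/-- `R*_1 = R_1 + d_{i*,1}/n` where `i*` minimizes `d i 0` over `G2`. -/
noncomputable def R1s {n : ℕ} (d : Fin n → Fin 2 → ℝ) : ℝ :=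
  R1 d + sInf ((fun i => d i 0) '' {i : Fin n | d i 0 < 1}) / n

/-- `R*_2 = R_2 + d_{j*,2}/n` where `j*` minimizes `d j 1` over `G1`. -/
noncomputable def R2s {n : ℕ} (d : Fin n → Fin 2 → ℝ) : ℝ :=
  R2 d + sInf ((fun i => d i 1) '' {i : Fin n | d i 0 = 1}) / n

/-- The output of mechanism F2* (rates coupled by `R*_1 / R*_2`). -/
def IsF2sAlloc {n : ℕ} (d A : Fin n → Fin 2 → ℝ) : Prop :=
  IsF2AllocWith d A (R1s d) (R2s d)

/-!
F2* hands out `(1/n) d_i` and then water-fills: the agents of `G1` are levelled on their resource-2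
share, those of `G2` on their resource-1 share. SI is built in. The level of each group is at most
`1/n`, so nobody envies an agent of the other group, and inside a group equal levels rule out envy.
The allocation is non-wasteful and exhausts a resource, hence PO.

For SP, a misreport that keeps agent `i` in its group can only help if it raises both shares of
`i`; then the level of that group rises. If the level of the other group does not drop, every share
weakly rises, which is impossible since a resource was exhausted. If it drops, the coupling
`ΔS₁ R*₂ = ΔS₂ R*₁` bounds the loss of the other group by the drop of `R*` caused by the misreport,
which is at most `(w' i - w i)/n`, while `i` alone gains more than that. A misreport that moves `i`
to the other group caps its share of its true dominant resource at `1/n`.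
-/

section Leontief

variable {n m : ℕ}

lemma util_le_div {dv Av : Fin m → ℝ} (hA : ∀ r, 0 ≤ Av r) {r : Fin m} (hr : 0 < dv r) :
    util dv Av ≤ Av r / dv r :=
  csSup_le ⟨0, le_rfl, fun r' => by simpa using hA r'⟩ fun _ hy =>
    (le_div_iff₀ hr).mpr (hy.2 r)

lemma util_smul_self {dv : Fin m → ℝ} {y : ℝ} (hy : 0 ≤ y) {r : Fin m} (hr : 0 < dv r) :
    util dv (y • dv) = y := by
  refine IsGreatest.csSup_eq ⟨⟨hy, fun _ => le_rfl⟩, fun y' hy' => ?_⟩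
  exact le_of_mul_le_mul_right (hy'.2 r) hr

lemma PO_of_smul_of_sum_eq_one {d A : Fin n → Fin m → ℝ} (hd : ∀ i r, 0 < d i r)
    (hA : ∀ i, ∃ y : ℝ, 0 ≤ y ∧ A i = y • d i) {r : Fin m} (hfull : ∑ i, A i r = 1) : PO d A := by
  rintro ⟨A', hA', hle, k, hk⟩
  choose y hy hAy using hA
  have hu : ∀ i, util (d i) (A i) = y i := fun i => by rw [hAy i, util_smul_self (hy i) (hd i r)]
  have hbound : ∀ i, util (d i) (A' i) * d i r ≤ A' i r := fun i =>
    (le_div_iff₀ (hd i r)).mp (util_le_div (hA'.1 i) (hd i r))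
  have hlt : ∑ i, A i r < ∑ i, A' i r :=
    calc ∑ i, A i r = ∑ i, util (d i) (A i) * d i r := by
          refine Finset.sum_congr rfl fun i _ => ?_
          rw [hu, hAy i, Pi.smul_apply, smul_eq_mul]
      _ < ∑ i, util (d i) (A' i) * d i r :=
          Finset.sum_lt_sum (fun i _ => mul_le_mul_of_nonneg_right (hle i) (hd i r).le)
            ⟨k, Finset.mem_univ k, mul_lt_mul_of_pos_right hk (hd k r)⟩
      _ ≤ ∑ i, A' i r := Finset.sum_le_sum fun i _ => hbound i
  linarith [hA'.2 r]

end Leontief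

section Shares

variable {n : ℕ} {c c' t t' : ℝ}

/-- The two shares of an agent with normalized demand `(1, c)` (dominant resource first) at water
level `t` of its non-dominant resource: `dominantShare n c t = minorShare n c t / c`. -/
noncomputable def dominantShare (n : ℕ) (c t : ℝ) : ℝ := max (1 / n) (t / c)

noncomputable def minorShare (n : ℕ) (c t : ℝ) : ℝ := max (c / n) t

lemma one_div_le_dominantShare : 1 / (n : ℝ) ≤ dominantShare n c t := le_max_left _ _

lemma le_minorShare : t ≤ minorShare n c t := le_max_right _ _

lemma div_le_minorShare : c / n ≤ minorShare n c t := le_max_left _ _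

lemma minorShare_eq_mul (hc : 0 < c) : minorShare n c t = c * dominantShare n c t := by
  rw [dominantShare, mul_max_of_nonneg _ _ hc.le, mul_one_div, mul_div_cancel₀ _ hc.ne', minorShare]

lemma dominantShare_eq_div (hc : 0 < c) : dominantShare n c t = minorShare n c t / c := by
  rw [minorShare_eq_mul hc, mul_div_cancel_left₀ _ hc.ne']

lemma dominantShare_mono (hc : 0 < c) (h : t ≤ t') :
    dominantShare n c t ≤ dominantShare n c t' :=
  max_le_max le_rfl (div_le_div_of_nonneg_right h hc.le)

lemma minorShare_mono (h : t ≤ t') : minorShare n c t ≤ minorShare n c t' :=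
  max_le_max le_rfl h

lemma dominantShare_eq_of_one_div_lt (h : 1 / (n : ℝ) < dominantShare n c t) :
    dominantShare n c t = t / c :=
  max_eq_right (le_of_lt (by simpa [dominantShare, lt_max_iff, lt_irrefl] using h))

lemma minorShare_le_one_div (hc : c ≤ 1) (ht : t ≤ 1 / n) : minorShare n c t ≤ 1 / n :=
  max_le (div_le_div_of_nonneg_right hc n.cast_nonneg) ht

lemma min_dominantShare_minorShare_div_le (hc : 0 < c) :
    min (dominantShare n c t) (minorShare n c t / c') ≤ dominantShare n c' t := by
  rcases le_total (t / c) (1 / n) with h | h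
  · exact (min_le_left _ _).trans ((max_eq_left h).trans_le one_div_le_dominantShare)
  · have hmin : minorShare n c t = t := by
      rw [minorShare_eq_mul hc, dominantShare, max_eq_right h, mul_div_cancel₀ _ hc.ne']
    rw [hmin]
    exact (min_le_right _ _).trans (le_max_right _ _)

end Shares

section Profile

variable {n : ℕ} (P : Finset (Fin n)) (w : Fin n → ℝ) (s t : ℝ)

/-- The water-filling profile of F2-type mechanisms, seen from a group `P` of agents sharing a
dominant resource `A`: agent `j` has normalized demand `1` for its dominant resource and `w j` for
the other one, the agents of `P` fill their non-dominant resource `B` up to level `s`, the other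
agents fill `A` up to level `t`. -/
noncomputable def shareA (j : Fin n) : ℝ :=
  if j ∈ P then dominantShare n (w j) s else minorShare n (w j) t

noncomputable def shareB (j : Fin n) : ℝ := shareA Pᶜ w t s j

noncomputable def excess : ℝ := ∑ j ∈ P, shareA P w s t j - P.card / n

/-- `R*` of the resource `B`: for `P = G1` this is `R2s`, for `P = G2` it is `R1s`. -/
noncomputable def resStar : ℝ := (P.card - ∑ j ∈ P, w j + sInf (w '' P)) / n

/-- The output of an F2* mechanism, as seen from `P`: the coupling
`excess P * resStar P = excess Pᶜ * resStar Pᶜ` is `ΔS₁ / ΔS₂ = R*₁ / R*₂`. -/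
structure IsCoupled : Prop where
  sum_shareA_le : ∑ j, shareA P w s t j ≤ 1
  sum_shareB_le : ∑ j, shareB P w s t j ≤ 1
  coupling : excess P w s t * resStar P w = excess Pᶜ w t s * resStar Pᶜ w

variable {P w s t}

lemma shareA_of_mem {j : Fin n} (hj : j ∈ P) : shareA P w s t j = dominantShare n (w j) s :=
  if_pos hj

lemma shareA_of_notMem {j : Fin n} (hj : j ∉ P) : shareA P w s t j = minorShare n (w j) t :=
  if_neg hj

lemma shareB_of_mem {j : Fin n} (hj : j ∈ P) : shareB P w s t j = minorShare n (w j) s :=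
  shareA_of_notMem (Finset.notMem_compl.mpr hj)

lemma shareB_of_notMem {j : Fin n} (hj : j ∉ P) : shareB P w s t j = dominantShare n (w j) t :=
  shareA_of_mem (Finset.mem_compl.mpr hj)

lemma shareB_compl (j : Fin n) : shareB Pᶜ w t s j = shareA P w s t j := by
  rw [shareB, compl_compl]

lemma IsCoupled.compl (h : IsCoupled P w s t) : IsCoupled Pᶜ w t s where
  sum_shareA_le := h.sum_shareB_le
  sum_shareB_le := by simpa only [shareB_compl] using h.sum_shareA_le
  coupling := by rw [compl_compl]; exact h.coupling.symm

end Profile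

section ProfileFacts

variable {n : ℕ} {P : Finset (Fin n)} {w w' : Fin n → ℝ} {s t s' t' : ℝ}

lemma shareB_eq_mul_shareA {j : Fin n} (hj : j ∈ P) (hw : 0 < w j) :
    shareB P w s t j = w j * shareA P w s t j := by
  rw [shareB_of_mem hj, shareA_of_mem hj, minorShare_eq_mul hw]

lemma shareA_eq_mul_shareB {j : Fin n} (hj : j ∉ P) (hw : 0 < w j) :
    shareA P w s t j = w j * shareB P w s t j := by
  rw [shareB_of_notMem hj, shareA_of_notMem hj, minorShare_eq_mul hw]

lemma shareA_congr {j : Fin n} (h : w' j = w j) : shareA P w' s t j = shareA P w s t j := by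
  simp only [shareA, h]

lemma shareB_congr {j : Fin n} (h : w' j = w j) : shareB P w' s t j = shareB P w s t j :=
  shareA_congr h

lemma shares_mono_of_mem {j : Fin n} (hj : j ∈ P) (hw : 0 < w j) (hs : s ≤ s') :
    shareA P w s t j ≤ shareA P w s' t' j ∧ shareB P w s t j ≤ shareB P w s' t' j := by
  rw [shareA_of_mem hj, shareA_of_mem hj, shareB_of_mem hj, shareB_of_mem hj]
  exact ⟨dominantShare_mono hw hs, minorShare_mono hs⟩

lemma shares_mono_of_notMem {j : Fin n} (hj : j ∉ P) (hw : 0 < w j) (ht : t ≤ t') :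
    shareA P w s t j ≤ shareA P w s' t' j ∧ shareB P w s t j ≤ shareB P w s' t' j := by
  rw [shareA_of_notMem hj, shareA_of_notMem hj, shareB_of_notMem hj, shareB_of_notMem hj]
  exact ⟨minorShare_mono ht, dominantShare_mono hw ht⟩

lemma IsCoupled.level_le (h : IsCoupled P w s t) (hP : P.Nonempty) : s ≤ 1 / n := by
  by_contra! hs
  obtain ⟨j₀, hj₀⟩ := hP
  have hle : ∀ j, 1 / (n : ℝ) ≤ shareB P w s t j := fun j => by
    by_cases hj : j ∈ P
    · exact hs.le.trans (shareB_of_mem hj ▸ le_minorShare)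
    · exact shareB_of_notMem hj ▸ one_div_le_dominantShare
  have hlt := Finset.sum_lt_sum (fun j _ => hle j)
    ⟨j₀, Finset.mem_univ _, hs.trans_le (shareB_of_mem hj₀ ▸ le_minorShare)⟩
  have hn : (n : ℝ) ≠ 0 := Nat.cast_ne_zero.mpr (Fin.pos j₀).ne'
  rw [Finset.sum_const, Finset.card_univ, Fintype.card_fin, nsmul_eq_mul,
    mul_one_div_cancel hn] at hlt
  linarith [h.sum_shareB_le]

lemma IsCoupled.shareB_le_one_div (h : IsCoupled P w s t) {j : Fin n} (hj : j ∈ P)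
    (hw : w j ≤ 1) : shareB P w s t j ≤ 1 / n :=
  shareB_of_mem hj ▸ minorShare_le_one_div hw (h.level_le ⟨j, hj⟩)

lemma IsCoupled.no_envy (h : IsCoupled P w s t)
    (hw : ∀ j, 0 < w j ∧ w j ≤ 1) {i : Fin n} (hi : i ∈ P) (j : Fin n) :
    min (shareA P w s t j) (shareB P w s t j / w i) ≤ shareA P w s t i := by
  by_cases hj : j ∈ P
  · rw [shareA_of_mem hj, shareB_of_mem hj, shareA_of_mem hi]
    exact min_dominantShare_minorShare_div_le (hw j).1
  · have hjA : shareA P w s t j ≤ 1 / n := by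
      rw [← shareB_compl]
      exact h.compl.shareB_le_one_div (Finset.mem_compl.mpr hj) (hw j).2
    exact (min_le_left _ _).trans (hjA.trans (shareA_of_mem hi ▸ one_div_le_dominantShare))

end ProfileFacts

section Residual

variable {n : ℕ} {P : Finset (Fin n)} {w w' : Fin n → ℝ} {s t : ℝ}

lemma exists_mem_eq_sInf_image (hP : P.Nonempty) : ∃ j ∈ P, w j = sInf (w '' P) := by
  obtain ⟨j, hj, hjw⟩ :=
    ((Finset.coe_nonempty.mpr hP).image w).csInf_mem (P.finite_toSet.image w)
  exact ⟨j, hj, hjw⟩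

lemma sInf_image_le {j : Fin n} (hj : j ∈ P) : sInf (w '' P) ≤ w j :=
  csInf_le ((P.finite_toSet.image w).bddBelow) ⟨j, hj, rfl⟩

lemma le_sInf_image (hP : P.Nonempty) {c : ℝ} (h : ∀ j ∈ P, c ≤ w j) : c ≤ sInf (w '' P) := by
  refine le_csInf ((Finset.coe_nonempty.mpr hP).image w) ?_
  rintro _ ⟨j, hj, rfl⟩
  exact h j hj

lemma sInf_image_add_le (hP : P.Nonempty) {δ : ℝ} (h : ∀ j ∈ P, w j + δ ≤ w' j) :
    sInf (w '' P) + δ ≤ sInf (w' '' P) :=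
  le_sInf_image hP fun j hj => by linarith [sInf_image_le (w := w) hj, h j hj]

lemma card_div_add_card_compl_div (hn : 0 < n) :
    (P.card : ℝ) / n + (Pᶜ.card : ℝ) / n = 1 := by
  rw [← add_div, ← Nat.cast_add, Finset.card_add_card_compl, Fintype.card_fin,
    div_self (Nat.cast_ne_zero.mpr hn.ne')]

/-- `n * resStar P w = ∑ j ∈ P, (1 - w j) + min w`, and the agent attaining the minimum alone
contributes `1`. -/
lemma one_div_le_resStar (hP : P.Nonempty) (hw : ∀ j ∈ P, w j ≤ 1) : 1 / (n : ℝ) ≤ resStar P w := by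
  obtain ⟨j₀, hj₀, hmin⟩ := exists_mem_eq_sInf_image (w := w) hP
  have hrest : ∑ j ∈ P.erase j₀, w j ≤ (P.erase j₀).card := by
    simpa using Finset.sum_le_card_nsmul _ _ 1 fun j hj => hw j (Finset.mem_of_mem_erase hj)
  have hcard : ((P.erase j₀).card : ℝ) + 1 = P.card := by
    exact_mod_cast Finset.card_erase_add_one hj₀
  refine div_le_div_of_nonneg_right ?_ n.cast_nonneg
  rw [← Finset.add_sum_erase P w hj₀, ← hmin]
  linarith

lemma resStar_pos (hP : P.Nonempty) (hw : ∀ j ∈ P, w j ≤ 1) : 0 < resStar P w := by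
  obtain ⟨j, hj⟩ := hP
  exact (one_div_pos.mpr (Nat.cast_pos.mpr (Fin.pos j))).trans_le (one_div_le_resStar ⟨j, hj⟩ hw)

lemma resStar_congr (h : ∀ j ∈ P, w' j = w j) : resStar P w' = resStar P w := by
  rw [resStar, resStar, Finset.sum_congr rfl h, Set.image_congr fun j hj => h j hj]

lemma resStar_sub_resStar {i : Fin n} (hi : i ∈ P) (hagree : ∀ j, j ≠ i → w' j = w j) :
    resStar P w - resStar P w' =
      (w' i - w i - (sInf (w' '' P) - sInf (w '' P))) / n := by
  have hsum : ∑ j ∈ P, w' j - ∑ j ∈ P, w j = w' i - w i := by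
    rw [← Finset.sum_sub_distrib, Finset.sum_eq_single i
      (fun j _ hji => by rw [hagree j hji, sub_self]) (fun h => absurd hi h)]
  rw [resStar, resStar, ← sub_div]
  congr 1
  linarith

lemma resStar_sub_resStar_le {i : Fin n} (hi : i ∈ P) (hagree : ∀ j, j ≠ i → w' j = w j) :
    resStar P w - resStar P w' ≤ max (w' i - w i) 0 / n := by
  have hinf : sInf (w '' P) + min (w' i - w i) 0 ≤ sInf (w' '' P) :=
    sInf_image_add_le ⟨i, hi⟩ fun j _ => by
      by_cases hji : j = i
      · subst hji; linarith [min_le_left (w' j - w j) 0]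
      · rw [hagree j hji]; linarith [min_le_right (w' i - w i) 0]
  rw [resStar_sub_resStar hi hagree]
  refine div_le_div_of_nonneg_right ?_ n.cast_nonneg
  linarith [min_add_max (w' i - w i) 0]

lemma excess_nonneg : 0 ≤ excess P w s t := by
  rw [excess, sub_nonneg, div_eq_mul_one_div, ← nsmul_eq_mul, ← Finset.sum_const]
  exact Finset.sum_le_sum fun j hj => shareA_of_mem hj ▸ one_div_le_dominantShare

lemma excess_lt_resStar_compl (hQ : Pᶜ.Nonempty) (hw : ∀ j, 0 < w j)
    (hfeas : ∑ j, shareA P w s t j ≤ 1) : excess P w s t < resStar Pᶜ w := by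
  obtain ⟨j₀, hj₀, hmin⟩ := exists_mem_eq_sInf_image (w := w) hQ
  have hn : 0 < n := Fin.pos j₀
  have hQsum : (∑ j ∈ Pᶜ, w j) / n ≤ ∑ j ∈ Pᶜ, shareA P w s t j := by
    rw [Finset.sum_div]
    exact Finset.sum_le_sum fun j hj =>
      shareA_of_notMem (Finset.mem_compl.mp hj) ▸ div_le_minorShare
  have hsplit := Finset.sum_add_sum_compl P (shareA P w s t)
  have hcard := card_div_add_card_compl_div (P := P) hn
  have hpos : 0 < sInf (w '' ↑Pᶜ) / n := div_pos (hmin ▸ hw j₀) (Nat.cast_pos.mpr hn)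
  rw [excess, resStar, add_div, sub_div]
  linarith

end Residual

lemma sub_le_sum_sub_sum {ι : Type*} {S : Finset ι} {f g : ι → ℝ} (h : ∀ j ∈ S, f j ≤ g j)
    {k : ι} (hk : k ∈ S) : g k - f k ≤ ∑ j ∈ S, g j - ∑ j ∈ S, f j := by
  rw [← Finset.sum_sub_distrib]
  exact Finset.single_le_sum (f := fun j => g j - f j) (fun j hj => sub_nonneg.mpr (h j hj)) hk

lemma coupling_gap {aS x y RA RB' g : ℝ} (hRA : 0 < RA) (hRB' : 0 < RB') (haS : 0 ≤ aS)
    (haRA : aS < RA) (hx : 0 < x) (hy : 0 ≤ y) (hid : y * RA + x * RB' = aS * g) :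
    0 < aS ∧ 0 < g ∧ y < g := by
  have hpos : 0 < aS * g := by nlinarith
  have hg : 0 < g := pos_of_mul_pos_right hpos haS
  refine ⟨pos_of_mul_pos_left hpos hg.le, hg, lt_of_mul_lt_mul_right ?_ hRA.le⟩
  nlinarith

lemma sub_mul_sub_le_mul_div_sub {a c e' m : ℝ} (hc : 0 ≤ c) (ha : c ≤ a) (hm : 0 < m) (hm1 : m ≤ 1)
    (hme : m ≤ e') : (a - c) * (e' - m) ≤ e' * a / m - c := by
  rw [le_sub_iff_add_le, le_div_iff₀ hm]
  have h1 : 0 ≤ (a - c) * (e' * (1 - m) + m * m) := mul_nonneg (by linarith) (by nlinarith)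
  have h2 : 0 ≤ c * (e' - m) := mul_nonneg hc (by linarith)
  nlinarith

section NoGain

variable {n : ℕ} {P : Finset (Fin n)} {w w' : Fin n → ℝ} {s t s' t' : ℝ} {i : Fin n}

lemma excess_sub_excess : excess P w' s' t' - excess P w s t =
    ∑ j ∈ P, shareA P w' s' t' j - ∑ j ∈ P, shareA P w s t j := by
  simp only [excess]; ring

lemma level_lt_of_gain (hi : i ∈ P) (hw' : 0 < w' i)
    (ha : shareA P w s t i < shareA P w' s' t' i) (hb : shareB P w s t i < shareB P w' s' t' i) :
    s < s' ∧ shareB P w' s' t' i = s' := by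
  have ha' : 1 / (n : ℝ) < dominantShare n (w' i) s' :=
    shareA_of_mem hi ▸ (shareA_of_mem hi ▸ one_div_le_dominantShare).trans_lt ha
  have hb' : shareB P w' s' t' i = s' := by
    rw [shareB_of_mem hi, minorShare_eq_mul hw', dominantShare_eq_of_one_div_lt ha',
      mul_div_cancel₀ _ hw'.ne']
  exact ⟨(shareB_of_mem hi ▸ le_minorShare).trans_lt (hb' ▸ hb), hb'⟩

lemma excess_eq_of_others_at_floor (hi : i ∈ P)
    (hfloor : ∀ k ∈ P, k ≠ i → shareA P w s t k ≤ 1 / n) :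
    excess P w s t = shareA P w s t i - 1 / n := by
  have hfloor_eq : ∀ k ∈ P.erase i, shareA P w s t k = 1 / n := fun k hk =>
    le_antisymm (hfloor k (Finset.mem_of_mem_erase hk) (Finset.ne_of_mem_erase hk))
      (shareA_of_mem (Finset.mem_of_mem_erase hk) ▸ one_div_le_dominantShare)
  have hcard : ((P.erase i).card : ℝ) + 1 = P.card := by
    exact_mod_cast Finset.card_erase_add_one hi
  rw [excess, ← Finset.add_sum_erase P _ hi, Finset.sum_congr rfl hfloor_eq, Finset.sum_const,
    nsmul_eq_mul, ← hcard]
  ring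

/-- An agent `k` of `P` at the floor has `s / w k ≤ 1/n < s / w i`. -/
lemma sInf_image_eq_of_others_at_floor (hw : ∀ j, 0 < w j) (hi : i ∈ P)
    (hfloor : ∀ k ∈ P, k ≠ i → shareA P w s t k ≤ 1 / n) (ha : 1 / n < shareA P w s t i) :
    sInf (w '' P) = w i := by
  rw [shareA_of_mem hi] at ha
  have hsi := dominantShare_eq_of_one_div_lt ha
  have hs : 0 < s := by
    have := (one_div_nonneg.mpr n.cast_nonneg).trans_lt (hsi ▸ ha)
    exact (div_pos_iff_of_pos_right (hw i)).mp this
  refine le_antisymm (sInf_image_le hi) (le_sInf_image ⟨i, hi⟩ fun k hk => ?_)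
  by_cases hki : k = i
  · rw [hki]
  have hkf : s / w k ≤ 1 / n := (le_max_right _ _).trans (shareA_of_mem hk ▸ hfloor k hk hki)
  exact ((div_lt_div_iff_of_pos_left hs (hw k) (hw i)).mp (hkf.trans_lt (hsi ▸ ha))).le

/-- The case where every other agent of `P` stays at its equal share `1/n`: then `i` has the least
non-dominant demand in `P`, so with `m` the least reported one, `resStar` drops by `(w' i - m) / n`,
too little to pay for the increase of the agent attaining `m`. -/
lemma false_of_others_at_floor (hw : ∀ j, 0 < w j ∧ w j ≤ 1) (hw' : ∀ j, 0 < w' j ∧ w' j ≤ 1)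
    (hagree : ∀ j, j ≠ i → w' j = w j) (hi : i ∈ P)
    (hfloor : ∀ k ∈ P, k ≠ i → shareA P w s t k ≤ 1 / n)
    (hmono : ∀ j ∈ P, shareA P w s t j ≤ shareA P w' s' t' j)
    (hs' : w' i * shareA P w s t i < s') (hx : 0 < excess P w' s' t' - excess P w s t)
    (hcore : (excess P w' s' t' - excess P w s t) * resStar P w' ≤
      excess P w s t * (resStar P w - resStar P w')) (haS : 0 < excess P w s t) : False := by
  have hn : (0 : ℝ) < n := Nat.cast_pos.mpr (Fin.pos i)
  have haS_eq := excess_eq_of_others_at_floor hi hfloor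
  have ha : 1 / (n : ℝ) < shareA P w s t i := by linarith
  obtain ⟨j₁, hj₁, hj₁min⟩ := exists_mem_eq_sInf_image (w := w') ⟨i, hi⟩
  have hg : resStar P w - resStar P w' = (w' i - w' j₁) / n := by
    rw [resStar_sub_resStar hi hagree, ← hj₁min,
      sInf_image_eq_of_others_at_floor (fun j => (hw j).1) hi hfloor ha]
    ring
  have hRB' : 1 / (n : ℝ) ≤ resStar P w' := one_div_le_resStar ⟨i, hi⟩ fun j _ => (hw' j).2
  by_cases hj₁i : j₁ = i
  · rw [hg, hj₁i, sub_self, zero_div, mul_zero] at hcore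
    nlinarith [mul_pos hx ((one_div_pos.mpr hn).trans_le hRB')]
  have hm : 0 < w' j₁ := (hw' j₁).1
  have hupper : excess P w' s' t' - excess P w s t ≤
      (shareA P w s t i - 1 / n) * (w' i - w' j₁) := by
    have h : (excess P w' s' t' - excess P w s t) * (1 / n) ≤
        (shareA P w s t i - 1 / n) * ((w' i - w' j₁) / n) := by
      rw [← haS_eq, ← hg]
      exact (mul_le_mul_of_nonneg_left hRB' hx.le).trans hcore
    rw [mul_one_div, mul_div_assoc'] at h
    exact (div_le_div_iff_of_pos_right hn).mp h
  have hlower : w' i * shareA P w s t i / w' j₁ - 1 / n <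
      excess P w' s' t' - excess P w s t := by
    have hfl : shareA P w s t j₁ = 1 / n :=
      le_antisymm (hfloor j₁ hj₁ hj₁i) (shareA_of_mem hj₁ ▸ one_div_le_dominantShare)
    have h := sub_le_sum_sub_sum hmono hj₁
    rw [← excess_sub_excess, hfl, shareA_of_mem hj₁] at h
    have hs'm := div_lt_div_of_pos_right hs' hm
    have hdom : s' / w' j₁ ≤ dominantShare n (w' j₁) s' := le_max_right _ _
    linarith
  linarith [sub_mul_sub_le_mul_div_sub (one_div_pos.mpr hn).le ha.le hm (hw' j₁).2
    (hj₁min ▸ sInf_image_le hi : w' j₁ ≤ w' i)]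

lemma IsCoupled.coupling_sub (hA : IsCoupled P w s t) (hA' : IsCoupled P w' s' t')
    (hRA : resStar Pᶜ w' = resStar Pᶜ w) :
    (excess Pᶜ w t s - excess Pᶜ w' t' s') * resStar Pᶜ w +
        (excess P w' s' t' - excess P w s t) * resStar P w' =
      excess P w s t * (resStar P w - resStar P w') := by
  have h' := hA'.coupling
  rw [hRA] at h'
  linear_combination h' - hA.coupling

lemma resStar_sub_lt_of_gain (hw : 0 < w i) (hagree : ∀ j, j ≠ i → w' j = w j) (hi : i ∈ P)
    (hg : 0 < resStar P w - resStar P w') (hs' : w' i * shareA P w s t i < s') :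
    resStar P w - resStar P w' < s' - shareB P w s t i := by
  have h := resStar_sub_resStar_le hi hagree
  have he : w i < w' i := by
    by_contra! he
    rw [max_eq_right (sub_nonpos.mpr he), zero_div] at h
    linarith
  rw [max_eq_left (sub_nonneg.mpr he.le)] at h
  have h1 : (w' i - w i) * (1 / n) ≤ (w' i - w i) * shareA P w s t i :=
    mul_le_mul_of_nonneg_left (shareA_of_mem hi ▸ one_div_le_dominantShare) (sub_nonneg.mpr he.le)
  rw [shareB_eq_mul_shareA hi hw]
  rw [mul_one_div] at h1
  linarith

/-- On `Pᶜ` the `A`-shares are the `B`-shares times `w j ≤ 1`, so they drop by less. -/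
lemma excess_sub_le_of_sum_eq_one (hw : ∀ j, 0 < w j ∧ w j ≤ 1)
    (hagree : ∀ j ∈ Pᶜ, w' j = w j)
    (hdown : ∀ j ∈ Pᶜ, shareB P w' s' t' j ≤ shareB P w s t j)
    (hfull : ∑ j, shareA P w s t j = 1) (hfeas : ∑ j, shareA P w' s' t' j ≤ 1) :
    excess P w' s' t' - excess P w s t ≤ excess Pᶜ w t s - excess Pᶜ w' t' s' := by
  have hQ : ∑ j ∈ Pᶜ, shareA P w s t j - ∑ j ∈ Pᶜ, shareA P w' s' t' j ≤
      ∑ j ∈ Pᶜ, shareB P w s t j - ∑ j ∈ Pᶜ, shareB P w' s' t' j := by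
    rw [← Finset.sum_sub_distrib, ← Finset.sum_sub_distrib]
    refine Finset.sum_le_sum fun j hj => ?_
    rw [shareA_eq_mul_shareB (Finset.mem_compl.mp hj) (hw j).1,
      shareA_eq_mul_shareB (Finset.mem_compl.mp hj) ((hagree j hj).symm ▸ (hw j).1),
      hagree j hj, ← mul_sub]
    exact mul_le_of_le_one_left (sub_nonneg.mpr (hdown j hj)) (hw j).2
  have hy : excess Pᶜ w t s - excess Pᶜ w' t' s' =
      ∑ j ∈ Pᶜ, shareB P w s t j - ∑ j ∈ Pᶜ, shareB P w' s' t' j := excess_sub_excess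
  rw [hy, excess_sub_excess]
  linarith [Finset.sum_add_sum_compl P (shareA P w s t),
    Finset.sum_add_sum_compl P (shareA P w' s' t')]

lemma sub_le_shareA_sub_of_one_div_lt {k : Fin n} (hw : 0 < w k ∧ w k ≤ 1) (hwk : w' k = w k)
    (hk : k ∈ P) (hs : s ≤ s') (hlt : 1 / n < shareA P w s t k) :
    s' - s ≤ shareA P w' s' t' k - shareA P w s t k := by
  rw [shareA_of_mem hk] at hlt
  rw [shareA_congr hwk, shareA_of_mem hk, shareA_of_mem hk, dominantShare_eq_of_one_div_lt hlt]
  have hdom : s' / w k ≤ dominantShare n (w k) s' := le_max_right _ _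
  refine (le_div_self (sub_nonneg.mpr hs) hw.1 hw.2).trans ?_
  rw [sub_div]
  linarith

/-- The case where the agents outside `P` lose: by the coupling, their loss is less than the drop
`resStar P w - resStar P w'`, which in turn is less than what `i` gains. -/
lemma false_of_gain_of_level_lt (hw : ∀ j, 0 < w j ∧ w j ≤ 1)
    (hw' : ∀ j, 0 < w' j ∧ w' j ≤ 1) (hagree : ∀ j, j ≠ i → w' j = w j) (hi : i ∈ P)
    (hA : IsCoupled P w s t) (hA' : IsCoupled P w' s' t')
    (hfull : ∑ j, shareA P w s t j = 1 ∨ ∑ j, shareB P w s t j = 1)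
    (hQ : Pᶜ.Nonempty) (ht : t' < t) (hs : s < s') (hb' : shareB P w' s' t' i = s')
    (ha : shareA P w s t i < shareA P w' s' t' i)
    (hmono : ∀ j ∈ P, shareA P w s t j ≤ shareA P w' s' t' j ∧
      shareB P w s t j ≤ shareB P w' s' t' j) : False := by
  have hagreeQ : ∀ j ∈ Pᶜ, w' j = w j := fun j hj =>
    hagree j fun h => Finset.mem_compl.mp hj (h ▸ hi)
  have hdown : ∀ j ∈ Pᶜ, shareB P w' s' t' j ≤ shareB P w s t j := fun j hj => by
    rw [shareB_congr (hagreeQ j hj)]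
    exact (shares_mono_of_notMem (Finset.mem_compl.mp hj) (hw j).1 ht.le).2
  have hx : 0 < excess P w' s' t' - excess P w s t := by
    rw [excess_sub_excess, sub_pos]
    exact Finset.sum_lt_sum (fun j hj => (hmono j hj).1) ⟨i, hi, ha⟩
  have hy : excess Pᶜ w t s - excess Pᶜ w' t' s' =
      ∑ j ∈ Pᶜ, shareB P w s t j - ∑ j ∈ Pᶜ, shareB P w' s' t' j := excess_sub_excess
  have hy0 : 0 ≤ excess Pᶜ w t s - excess Pᶜ w' t' s' := by
    rw [hy, sub_nonneg]; exact Finset.sum_le_sum hdown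
  have hRA := resStar_pos hQ fun j _ => (hw j).2
  have hid := hA.coupling_sub hA' (resStar_congr hagreeQ)
  obtain ⟨haS, hg, hyg⟩ := coupling_gap hRA (resStar_pos ⟨i, hi⟩ fun j _ => (hw' j).2)
    excess_nonneg (excess_lt_resStar_compl hQ (fun j => (hw j).1) hA.sum_shareA_le) hx hy0 hid
  have hs' : w' i * shareA P w s t i < s' := by
    rw [← hb', shareB_eq_mul_shareA hi (hw' i).1]
    exact mul_lt_mul_of_pos_left ha (hw' i).1
  have hgain := resStar_sub_lt_of_gain (hw i).1 hagree hi hg hs'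
  rcases hfull with hfA | hfB
  · have hxy := excess_sub_le_of_sum_eq_one hw hagreeQ hdown hfA hA'.sum_shareA_le
    by_cases hk : ∃ k ∈ P, k ≠ i ∧ 1 / n < shareA P w s t k
    · obtain ⟨k, hk, hki, hlt⟩ := hk
      have h := sub_le_sum_sub_sum (fun j hj => (hmono j hj).1) hk
      rw [← excess_sub_excess] at h
      linarith [sub_le_shareA_sub_of_one_div_lt (hw k) (hagree k hki) hk hs.le hlt (t' := t'),
        (shareB_of_mem hi ▸ le_minorShare : s ≤ shareB P w s t i)]
    · simp only [not_exists, not_and, not_lt] at hk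
      exact false_of_others_at_floor hw hw' hagree hi hk (fun j hj => (hmono j hj).1) hs' hx
        (by nlinarith [mul_nonneg hy0 hRA.le]) haS
  · have hP := sub_le_sum_sub_sum (fun j hj => (hmono j hj).2) hi
    linarith [Finset.sum_add_sum_compl P (shareB P w s t),
      Finset.sum_add_sum_compl P (shareB P w' s' t'), hA'.sum_shareB_le]

/-- The left-hand side is the true utility of `i` for the bundle it gets after misreporting. -/
theorem IsCoupled.no_gain_of_misreport (hw : ∀ j, 0 < w j ∧ w j ≤ 1)
    (hw' : ∀ j, 0 < w' j ∧ w' j ≤ 1) (hagree : ∀ j, j ≠ i → w' j = w j) (hi : i ∈ P)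
    (hA : IsCoupled P w s t) (hA' : IsCoupled P w' s' t')
    (hfull : ∑ j, shareA P w s t j = 1 ∨ ∑ j, shareB P w s t j = 1) :
    min (shareA P w' s' t' i) (shareB P w' s' t' i / w i) ≤ shareA P w s t i := by
  by_contra! hgain
  have ha : shareA P w s t i < shareA P w' s' t' i := hgain.trans_le (min_le_left _ _)
  have hb : shareB P w s t i < shareB P w' s' t' i := by
    rw [shareB_eq_mul_shareA hi (hw i).1, mul_comm, ← lt_div_iff₀ (hw i).1]
    exact hgain.trans_le (min_le_right _ _)
  obtain ⟨hs, hb'⟩ := level_lt_of_gain hi (hw' i).1 ha hb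
  have hmono : ∀ j ∈ P, shareA P w s t j ≤ shareA P w' s' t' j ∧
      shareB P w s t j ≤ shareB P w' s' t' j := fun j hj => by
    by_cases hji : j = i
    · subst hji; exact ⟨ha.le, hb.le⟩
    · rw [shareA_congr (hagree j hji), shareB_congr (hagree j hji)]
      exact shares_mono_of_mem hj (hw j).1 hs.le
  by_cases hdown : Pᶜ.Nonempty ∧ t' < t
  · exact false_of_gain_of_level_lt hw hw' hagree hi hA hA' hfull hdown.1 hdown.2 hs hb' ha hmono
  have hall : ∀ j, shareA P w s t j ≤ shareA P w' s' t' j ∧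
      shareB P w s t j ≤ shareB P w' s' t' j := fun j => by
    by_cases hj : j ∈ P
    · exact hmono j hj
    have hji : j ≠ i := fun h => hj (h ▸ hi)
    rw [shareA_congr (hagree j hji), shareB_congr (hagree j hji)]
    exact shares_mono_of_notMem hj (hw j).1
      (not_lt.mp fun h => hdown ⟨⟨j, Finset.mem_compl.mpr hj⟩, h⟩)
  rcases hfull with hfA | hfB
  · linarith [Finset.sum_lt_sum (fun j _ => (hall j).1) ⟨i, Finset.mem_univ _, ha⟩,
      hA'.sum_shareA_le]
  · linarith [Finset.sum_lt_sum (fun j _ => (hall j).2) ⟨i, Finset.mem_univ _, hb⟩,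
      hA'.sum_shareB_le]

end NoGain

section Bridge

variable {n : ℕ} {d : Fin n → Fin 2 → ℝ}

noncomputable def minorDemand (d : Fin n → Fin 2 → ℝ) (j : Fin n) : ℝ :=
  if d j 0 = 1 then d j 1 else d j 0

lemma mem_G1 {j : Fin n} : j ∈ G1 d ↔ d j 0 = 1 := by simp [G1]

lemma mem_G2 {j : Fin n} : j ∈ G2 d ↔ d j 0 < 1 := by simp [G2]

lemma ValidInstance.minorDemand_mem (hv : ValidInstance d) (j : Fin n) :
    0 < minorDemand d j ∧ minorDemand d j ≤ 1 := by
  unfold minorDemand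
  split_ifs
  exacts [hv.1 j 1, hv.1 j 0]

lemma ValidInstance.G2_eq_compl (hv : ValidInstance d) : G2 d = (G1 d)ᶜ := by
  ext j
  rw [Finset.mem_compl, mem_G1, mem_G2]
  exact ⟨ne_of_lt, fun h => lt_of_le_of_ne (hv.1 j 0).2 h⟩

lemma ValidInstance.demand_of_notMem_G1 (hv : ValidInstance d) {j : Fin n} (hj : j ∉ G1 d) :
    d j 1 = 1 ∧ d j 0 = minorDemand d j := by
  rw [mem_G1] at hj
  refine ⟨?_, (if_neg hj).symm⟩
  obtain ⟨r, hr⟩ := hv.2 j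
  fin_cases r
  exacts [absurd hr hj, hr]

lemma demand_of_mem_G1 {j : Fin n} (hj : j ∈ G1 d) : d j 0 = 1 ∧ d j 1 = minorDemand d j := by
  rw [mem_G1] at hj
  exact ⟨hj, (if_pos hj).symm⟩

lemma G1_eq_of_agree {d' : Fin n → Fin 2 → ℝ} {i : Fin n}
    (hagree : ∀ j, j ≠ i → d' j = d j) (hi : i ∈ G1 d' ↔ i ∈ G1 d) : G1 d' = G1 d := by
  ext j
  by_cases hji : j = i
  · rw [hji, hi]
  · rw [mem_G1, mem_G1, hagree j hji]

lemma minorDemand_agree {d' : Fin n → Fin 2 → ℝ} {i : Fin n}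
    (hagree : ∀ j, j ≠ i → d' j = d j) (j : Fin n) (hj : j ≠ i) :
    minorDemand d' j = minorDemand d j := by
  rw [minorDemand, minorDemand, hagree j hj]

end Bridge

section F2sProfile

variable {n : ℕ} {d A : Fin n → Fin 2 → ℝ} {t1 t2 : ℝ}

lemma Waterfill.eq_shares (hv : ValidInstance d) (hwf : Waterfill d A t1 t2) (j : Fin n) :
    A j 0 = shareA (G1 d) (minorDemand d) t1 t2 j ∧
      A j 1 = shareB (G1 d) (minorDemand d) t1 t2 j := by
  have hw := (hv.minorDemand_mem j).1
  by_cases hj : j ∈ G1 d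
  · obtain ⟨h1, h0⟩ := (hwf j).1 (mem_G1.mp hj)
    rw [shareA_of_mem hj, shareB_of_mem hj, dominantShare_eq_div hw, minorShare,
      ← (demand_of_mem_G1 hj).2]
    exact ⟨h0.trans (by rw [h1]), h1⟩
  · obtain ⟨h0, h1⟩ := (hwf j).2 (lt_of_le_of_ne (hv.1 j 0).2 (mt mem_G1.mpr hj))
    rw [shareA_of_notMem hj, shareB_of_notMem hj, dominantShare_eq_div hw, minorShare,
      ← (hv.demand_of_notMem_G1 hj).2]
    exact ⟨h0, h1.trans (by rw [h0])⟩

lemma card_G1_add_card_G2 (hv : ValidInstance d) : ((G1 d).card : ℝ) + (G2 d).card = n := by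
  rw [hv.G2_eq_compl]
  exact_mod_cast (Finset.card_add_card_compl _).trans (Fintype.card_fin n)

lemma R2s_eq_resStar (hn : 0 < n) (hv : ValidInstance d) :
    R2s d = resStar (G1 d) (minorDemand d) := by
  have himg : (fun i => d i 1) '' {i : Fin n | d i 0 = 1} = minorDemand d '' ↑(G1 d) := by
    rw [show (↑(G1 d) : Set (Fin n)) = {i | d i 0 = 1} by ext; simp [mem_G1]]
    exact Set.image_congr fun j hj => (if_pos hj).symm
  have hsum : ∑ j ∈ G1 d, d j 1 = ∑ j ∈ G1 d, minorDemand d j :=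
    Finset.sum_congr rfl fun j hj => (demand_of_mem_G1 hj).2
  rw [R2s, R2, resStar, himg, hsum]
  field_simp
  linarith [card_G1_add_card_G2 hv]

lemma R1s_eq_resStar (hn : 0 < n) (hv : ValidInstance d) :
    R1s d = resStar (G1 d)ᶜ (minorDemand d) := by
  have himg : (fun i => d i 0) '' {i : Fin n | d i 0 < 1} = minorDemand d '' ↑(G1 d)ᶜ := by
    rw [← hv.G2_eq_compl, show (↑(G2 d) : Set (Fin n)) = {i | d i 0 < 1} by ext; simp [mem_G2]]
    exact Set.image_congr fun j hj => (if_neg (ne_of_lt hj)).symm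
  have hsum : ∑ j ∈ G2 d, d j 0 = ∑ j ∈ G2 d, minorDemand d j :=
    Finset.sum_congr rfl fun j hj => (if_neg (ne_of_lt (mem_G2.mp hj))).symm
  rw [R1s, R1, resStar, himg, ← hv.G2_eq_compl, hsum]
  field_simp
  linarith [card_G1_add_card_G2 hv]

/-- The allocation `A` read from a group `P` of agents with dominant resource `p`, the other
resource being `q`. -/
structure IsView (d A : Fin n → Fin 2 → ℝ) (P : Finset (Fin n)) (s t : ℝ) (p q : Fin 2) :
    Prop where
  isCoupled : IsCoupled P (minorDemand d) s t
  full : ∑ j, shareA P (minorDemand d) s t j = 1 ∨ ∑ j, shareB P (minorDemand d) s t j = 1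
  ne : p ≠ q
  apply_dom : ∀ j, A j p = shareA P (minorDemand d) s t j
  apply_minor : ∀ j, A j q = shareB P (minorDemand d) s t j
  nonneg : ∀ j r, 0 ≤ A j r
  demand_dom : ∀ j ∈ P, d j p = 1
  demand_minor : ∀ j ∈ P, d j q = minorDemand d j

lemma IsF2sAlloc.isView_G1 (hn : 0 < n) (hv : ValidInstance d) (hA : IsF2sAlloc d A) :
    ∃ s t, IsView d A (G1 d) s t 0 1 := by
  obtain ⟨t1, t2, -, -, hwf, hcpl, hfeas, r, hr⟩ := hA
  have hsh := hwf.eq_shares hv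
  have hsum0 : ∑ j, A j 0 = ∑ j, shareA (G1 d) (minorDemand d) t1 t2 j :=
    Finset.sum_congr rfl fun j _ => (hsh j).1
  have hsum1 : ∑ j, A j 1 = ∑ j, shareB (G1 d) (minorDemand d) t1 t2 j :=
    Finset.sum_congr rfl fun j _ => (hsh j).2
  refine ⟨t1, t2, ⟨⟨hsum0 ▸ hfeas.2 0, hsum1 ▸ hfeas.2 1, ?_⟩, ?_, by decide,
    fun j => (hsh j).1, fun j => (hsh j).2, hfeas.1, fun j hj => (demand_of_mem_G1 hj).1,
    fun j hj => (demand_of_mem_G1 hj).2⟩⟩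
  · have hS1 : dS1 d A = excess (G1 d) (minorDemand d) t1 t2 := by
      rw [dS1, excess, Finset.sum_congr rfl fun j _ => (hsh j).1]
    have hS2 : dS2 d A = excess (G1 d)ᶜ (minorDemand d) t2 t1 := by
      rw [dS2, excess, hv.G2_eq_compl, Finset.sum_congr rfl fun j _ => (hsh j).2]
      rfl
    rw [← hS1, ← hS2, ← R2s_eq_resStar hn hv, ← R1s_eq_resStar hn hv]
    exact hcpl
  · fin_cases r
    exacts [Or.inl (hsum0 ▸ hr), Or.inr (hsum1 ▸ hr)]

lemma IsView.compl_G1 (hv : ValidInstance d) {s t : ℝ} (h : IsView d A (G1 d) s t 0 1) :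
    IsView d A (G1 d)ᶜ t s 1 0 where
  isCoupled := h.isCoupled.compl
  full := h.full.symm.imp id fun h0 => by simpa only [shareB_compl] using h0
  ne := by decide
  apply_dom := h.apply_minor
  apply_minor j := (h.apply_dom j).trans (shareB_compl j).symm
  nonneg := h.nonneg
  demand_dom _ hj := (hv.demand_of_notMem_G1 (Finset.mem_compl.mp hj)).1
  demand_minor _ hj := (hv.demand_of_notMem_G1 (Finset.mem_compl.mp hj)).2

lemma IsF2sAlloc.exists_isView (hn : 0 < n) (hv : ValidInstance d) (hA : IsF2sAlloc d A)
    (i : Fin n) : ∃ P s t p q, i ∈ P ∧ IsView d A P s t p q := by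
  obtain ⟨s, t, h⟩ := hA.isView_G1 hn hv
  by_cases hi : i ∈ G1 d
  · exact ⟨_, _, _, _, _, hi, h⟩
  · exact ⟨_, _, _, _, _, Finset.mem_compl.mpr hi, h.compl_G1 hv⟩

end F2sProfile

section Properties

variable {n : ℕ} {d d' A A' : Fin n → Fin 2 → ℝ} {P P' : Finset (Fin n)} {s t s' t' : ℝ}
  {p q : Fin 2} {i : Fin n}

lemma IsView.eq_smul (hv : ValidInstance d) (h : IsView d A P s t p q) (hi : i ∈ P) :
    A i = shareA P (minorDemand d) s t i • d i := by
  ext r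
  rw [Pi.smul_apply, smul_eq_mul]
  obtain rfl | rfl : r = p ∨ r = q := by
    have := h.ne; fin_cases p <;> fin_cases q <;> fin_cases r <;> simp_all
  · rw [h.apply_dom, h.demand_dom i hi, mul_one]
  · rw [h.apply_minor, h.demand_minor i hi, mul_comm,
      shareB_eq_mul_shareA hi (hv.minorDemand_mem i).1]

lemma IsView.util_self (hv : ValidInstance d) (h : IsView d A P s t p q) (hi : i ∈ P) :
    util (d i) (A i) = shareA P (minorDemand d) s t i := by
  rw [h.eq_smul hv hi, util_smul_self (h.apply_dom i ▸ h.nonneg i p) (hv.1 i p).1]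

lemma IsView.util_le (hv : ValidInstance d) (h : IsView d A P s t p q) (hi : i ∈ P)
    {B : Fin 2 → ℝ} (hB : ∀ r, 0 ≤ B r) : util (d i) B ≤ min (B p) (B q / minorDemand d i) := by
  have hp := util_le_div hB (hv.1 i p).1
  have hq := util_le_div hB (hv.1 i q).1
  rw [h.demand_dom i hi, div_one] at hp
  rw [h.demand_minor i hi] at hq
  exact le_min hp hq

lemma IsView.one_div_le_util (hv : ValidInstance d) (h : IsView d A P s t p q) (hi : i ∈ P) :
    1 / (n : ℝ) ≤ util (d i) (A i) := by
  rw [h.util_self hv hi, shareA_of_mem hi]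
  exact one_div_le_dominantShare

lemma IsView.util_le_util (hv : ValidInstance d) (h : IsView d A P s t p q) (hi : i ∈ P)
    (j : Fin n) : util (d i) (A j) ≤ util (d i) (A i) := by
  refine (h.util_le hv hi (h.nonneg j)).trans ?_
  rw [h.apply_dom, h.apply_minor, h.util_self hv hi]
  exact h.isCoupled.no_envy hv.minorDemand_mem hi j

lemma IsView.util_le_of_misreport (hv : ValidInstance d) (hv' : ValidInstance d')
    (hagree : ∀ j, j ≠ i → d' j = d j) (h : IsView d A P s t p q) (h' : IsView d' A' P s' t' p q)
    (hi : i ∈ P) : util (d i) (A' i) ≤ util (d i) (A i) := by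
  refine (h.util_le hv hi (h'.nonneg i)).trans ?_
  rw [h'.apply_dom, h'.apply_minor, h.util_self hv hi]
  exact h.isCoupled.no_gain_of_misreport hv.minorDemand_mem hv'.minorDemand_mem
    (minorDemand_agree hagree) hi h'.isCoupled h.full

/-- Reporting the other dominant resource puts `i` in a group whose level on its true dominant
resource `p` is capped by `1/n`. -/
lemma IsView.util_le_of_cross (hv : ValidInstance d) (hv' : ValidInstance d')
    (h : IsView d A P s t p q) (h' : IsView d' A' P' s' t' q p) (hi : i ∈ P) (hi' : i ∈ P') :
    util (d i) (A' i) ≤ util (d i) (A i) := by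
  have hp := util_le_div (h'.nonneg i) (hv.1 i p).1
  rw [h.demand_dom i hi, div_one, h'.apply_minor] at hp
  exact hp.trans ((h'.isCoupled.shareB_le_one_div hi' (hv'.minorDemand_mem i).2).trans
    (h.one_div_le_util hv hi))

lemma IsF2sAlloc.po (hn : 0 < n) (hv : ValidInstance d) (hA : IsF2sAlloc d A) : PO d A := by
  obtain ⟨s, t, h⟩ := hA.isView_G1 hn hv
  have hsmul : ∀ j, ∃ y : ℝ, 0 ≤ y ∧ A j = y • d j := fun j => by
    obtain ⟨_, _, _, p, _, hj, hj'⟩ := hA.exists_isView hn hv j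
    exact ⟨_, hj'.apply_dom j ▸ hj'.nonneg j p, hj'.eq_smul hv hj⟩
  obtain ⟨r, hr⟩ : ∃ r, ∑ j, A j r = 1 := h.full.elim
    (fun h0 => ⟨0, (Finset.sum_congr rfl fun j _ => h.apply_dom j).trans h0⟩)
    (fun h1 => ⟨1, (Finset.sum_congr rfl fun j _ => h.apply_minor j).trans h1⟩)
  exact PO_of_smul_of_sum_eq_one (fun i r => (hv.1 i r).1) hsmul hr

lemma IsF2sAlloc.util_le_of_misreport (hn : 0 < n) (hv : ValidInstance d)
    (hv' : ValidInstance d') (hagree : ∀ j, j ≠ i → d' j = d j) (hA : IsF2sAlloc d A)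
    (hA' : IsF2sAlloc d' A') : util (d i) (A' i) ≤ util (d i) (A i) := by
  obtain ⟨s, t, h⟩ := hA.isView_G1 hn hv
  obtain ⟨s', t', h'⟩ := hA'.isView_G1 hn hv'
  by_cases hi : i ∈ G1 d <;> by_cases hi' : i ∈ G1 d'
  · rw [G1_eq_of_agree hagree (iff_of_true hi' hi)] at h'
    exact h.util_le_of_misreport hv hv' hagree h' hi
  · exact h.util_le_of_cross hv hv' (h'.compl_G1 hv') hi (Finset.mem_compl.mpr hi')
  · exact (h.compl_G1 hv).util_le_of_cross hv hv' h' (Finset.mem_compl.mpr hi) hi'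
  · have h'c := h'.compl_G1 hv'
    rw [G1_eq_of_agree hagree (iff_of_false hi' hi)] at h'c
    exact (h.compl_G1 hv).util_le_of_misreport hv hv' hagree h'c (Finset.mem_compl.mpr hi)

end Properties

/-- With two resources, mechanism F2* satisfies SI, EF, PO and SP. -/
theorem f2s_properties :
    (∀ (n : ℕ), 0 < n → ∀ d : Fin n → Fin 2 → ℝ, ValidInstance d →
      ∀ A : Fin n → Fin 2 → ℝ, IsF2sAlloc d A →
        SI d A ∧ EF d A ∧ PO d A) ∧
    (∀ (n : ℕ), 0 < n → ∀ (d d' : Fin n → Fin 2 → ℝ) (i : Fin n),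
      ValidInstance d → ValidInstance d' → (∀ j, j ≠ i → d' j = d j) →
      ∀ A A' : Fin n → Fin 2 → ℝ, IsF2sAlloc d A → IsF2sAlloc d' A' →
        util (d i) (A' i) ≤ util (d i) (A i)) := by
  refine ⟨fun n hn d hv A hA => ⟨fun i => ?_, fun i j => ?_, hA.po hn hv⟩,
    fun n hn d d' i hv hv' hagree A A' hA hA' => hA.util_le_of_misreport hn hv hv' hagree hA'⟩
  · obtain ⟨P, s, t, p, q, hi, h⟩ := hA.exists_isView hn hv i
    exact h.one_div_le_util hv hi
  · obtain ⟨P, s, t, p, q, hi, h⟩ := hA.exists_isView hn hv i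
    exact h.util_le_util hv hi j
end
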